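/- arXiv:2002.10367 — 6 statements merged into one kernel-verified Lean document; each statement's English description precedes it below -/
import Mathlib

section
/- Let G be a simple graph on at least seven vertices such that for every triple of distinct vertices v1, v2, v3, at least two of them are adjacent. Then G contains two distinct 3-cycles (triangles) that share an edge. -/
/-!
Suppose `G` has no two triangles sharing an edge, while its complement is triangle-free.
If `G` had a triangle `T`, every vertex outside `T` would be adjacent to at most one vertex
of `T`, so any two vertices outside `T` would have a common non-neighbour in `T` and hence be
adjacent: the at least four vertices outside `T` would form a `K₄`, which contains two triangles
sharing an edge. So `G` and its complement are both triangle-free, and then every vertex has at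
most two neighbours and at most two non-neighbours, i.e. `G` has at most five vertices.
-/

open Finset

namespace SimpleGraph

variable {V : Type*} {G : SimpleGraph V}

/-- A diamond is `K₄` minus an edge. -/
def HasDiamond (G : SimpleGraph V) : Prop :=
  ∃ a b c d : V, c ≠ d ∧ G.Adj a b ∧ G.Adj a c ∧ G.Adj b c ∧ G.Adj a d ∧ G.Adj b d

theorem IsClique.card_lt_of_cliqueFree {n : ℕ} {s : Finset V} (hs : G.IsClique (s : Set V))
    (hG : G.CliqueFree n) : #s < n := by
  by_contra! hn
  obtain ⟨t, hts, ht⟩ := exists_subset_card_eq hn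
  exact hG t ⟨hs.subset (coe_subset.2 hts), ht⟩

theorem adj_of_compl_adj_of_compl_adj (hGc : Gᶜ.CliqueFree 3) {p u w : V}
    (hpu : Gᶜ.Adj p u) (hpw : Gᶜ.Adj p w) (huw : u ≠ w) : G.Adj u w := by
  classical
  by_contra h
  exact hGc {p, u, w} (is3Clique_triple_iff.2 ⟨hpu, hpw, (compl_adj G u w).2 ⟨huw, h⟩⟩)

theorem cliqueFree_four_of_not_hasDiamond (hD : ¬G.HasDiamond) : G.CliqueFree 4 := by
  classical
  intro s hs
  obtain ⟨a, t, hat, rfl, ht⟩ := card_eq_succ.1 hs.card_eq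
  obtain ⟨x, y, z, hxy, hxz, hyz, rfl⟩ := card_eq_three.1 ht
  simp only [mem_insert, mem_singleton, not_or] at hat
  obtain ⟨hax, hay, haz⟩ := hat
  have hadj : ∀ ⦃u v⦄, u ∈ ({a, x, y, z} : Finset V) → v ∈ ({a, x, y, z} : Finset V) →
      u ≠ v → G.Adj u v := fun u v hu hv => hs.isClique (mem_coe.2 hu) (mem_coe.2 hv)
  exact hD ⟨x, y, z, a, Ne.symm haz, hadj (by simp) (by simp) hxy, hadj (by simp) (by simp) hxz,
    hadj (by simp) (by simp) hyz, hadj (by simp) (by simp) (Ne.symm hax),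
    hadj (by simp) (by simp) (Ne.symm hay)⟩

theorem IsClique.card_filter_adj_le_one [DecidableRel G.Adj] (hD : ¬G.HasDiamond) {T : Finset V}
    (hT : G.IsClique (T : Set V)) (hT3 : 3 ≤ #T) {w : V} (hw : w ∉ T) : #{a ∈ T | G.Adj w a} ≤ 1 := by
  classical
  refine card_le_one.2 fun a ha b hb => ?_
  by_contra hab
  rw [mem_filter] at ha hb
  obtain ⟨c, hcT, hcab⟩ := exists_mem_notMem_of_card_lt_card
    (card_le_two.trans_lt (by omega : 2 < #T) : #({a, b} : Finset V) < #T)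
  simp only [mem_insert, mem_singleton, not_or] at hcab
  exact hD ⟨a, b, c, w, fun hcw => hw (hcw ▸ hcT), hT ha.1 hb.1 hab, hT ha.1 hcT (Ne.symm hcab.1),
    hT hb.1 hcT (Ne.symm hcab.2), ha.2.symm, hb.2.symm⟩

theorem isClique_compl_of_isNClique_three [Fintype V] [DecidableEq V] (hGc : Gᶜ.CliqueFree 3)
    (hD : ¬G.HasDiamond) {T : Finset V} (hT : G.IsNClique 3 T) :
    G.IsClique ((Tᶜ : Finset V) : Set V) := by
  classical
  have hnonadj : ∀ w ∉ T, 2 ≤ #{a ∈ T | ¬G.Adj w a} := fun w hw => by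
    have := hT.isClique.card_filter_adj_le_one hD hT.card_eq.ge hw
    have := card_filter_add_card_filter_not (s := T) (fun a => G.Adj w a)
    have := hT.card_eq
    omega
  intro u hu w hw huw
  rw [coe_compl, Set.mem_compl_iff, mem_coe] at hu hw
  obtain ⟨p, hp⟩ := inter_nonempty_of_card_lt_card_add_card (filter_subset (¬G.Adj u ·) T)
    (filter_subset (¬G.Adj w ·) T)
    (by have := hnonadj u hu; have := hnonadj w hw; have := hT.card_eq; omega)
  simp only [mem_inter, mem_filter] at hp
  refine adj_of_compl_adj_of_compl_adj hGc (p := p) ?_ ?_ huw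
  · exact (compl_adj G p u).2 ⟨fun h => hu (h ▸ hp.1.1), fun h => hp.1.2 h.symm⟩
  · exact (compl_adj G p w).2 ⟨fun h => hw (h ▸ hp.1.1), fun h => hp.2.2 h.symm⟩

theorem degree_le_two [Fintype V] [DecidableRel G.Adj] (hG : G.CliqueFree 3)
    (hGc : Gᶜ.CliqueFree 3) (v : V) : G.degree v ≤ 2 := by
  have : Gᶜ.IsClique ((G.neighborFinset v : Finset V) : Set V) := by
    rw [coe_neighborFinset, isClique_compl]
    exact isIndepSet_neighborSet_of_triangleFree G hG v
  have := this.card_lt_of_cliqueFree hGc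
  rw [card_neighborFinset_eq_degree] at this
  omega

theorem card_le_five_of_cliqueFree_three [Fintype V] (hG : G.CliqueFree 3)
    (hGc : Gᶜ.CliqueFree 3) : Fintype.card V ≤ 5 := by
  classical
  rcases isEmpty_or_nonempty V with _ | ⟨⟨v⟩⟩
  · simp
  have hdeg := degree_le_two hG hGc v
  have hcodeg := degree_le_two hGc (by rwa [compl_compl]) v
  rw [degree_compl] at hcodeg
  omega

end SimpleGraph

/-- A simple graph on at least seven vertices in which every triple of
distinct vertices contains at least one edge has two distinct triangles
sharing an edge. -/
theorem two_triangles_sharing_edge {V : Type*} [Fintype V]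
    (G : SimpleGraph V) (hcard : 7 ≤ Fintype.card V)
    (h : ∀ v₁ v₂ v₃ : V, v₁ ≠ v₂ → v₁ ≠ v₃ → v₂ ≠ v₃ →
      G.Adj v₁ v₂ ∨ G.Adj v₁ v₃ ∨ G.Adj v₂ v₃) :
    ∃ a b c d : V, c ≠ d ∧ G.Adj a b ∧ G.Adj a c ∧ G.Adj b c ∧
      G.Adj a d ∧ G.Adj b d := by
  classical
  by_contra hD
  have hGc : Gᶜ.CliqueFree 3 := by
    intro s hs
    obtain ⟨a, b, c, hab, hac, hbc, rfl⟩ := SimpleGraph.is3Clique_iff.1 hs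
    rw [SimpleGraph.compl_adj] at hab hac hbc
    rcases h a b c hab.1 hac.1 hbc.1 with h' | h' | h'
    exacts [hab.2 h', hac.2 h', hbc.2 h']
  have hG : G.CliqueFree 3 := fun T hT => by
    have := (G.isClique_compl_of_isNClique_three hGc hD hT).card_lt_of_cliqueFree
      (G.cliqueFree_four_of_not_hasDiamond hD)
    rw [card_compl, hT.card_eq] at this
    omega
  have := G.card_le_five_of_cliqueFree_three hG hGc
  omega
end

section
/- Let G be a simple graph on at least seven vertices containing no two distinct triangles sharing an edge. Then G has three vertices that are pairwise non-adjacent (an independent set of size 3). -/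
/-!
Suppose there is no independent triple. The Ramsey argument for `R(3, 3) = 6` yields a triangle
`abc`. A vertex outside it is adjacent to at most one corner, since otherwise an edge of `abc` lies
in a second triangle. Hence two outside vertices have a common non-neighbour among the corners and
must be adjacent, so the at least four outside vertices form a clique. But a `K₄` contains two
triangles sharing an edge.
-/

open Finset SimpleGraph

namespace SimpleGraph

variable {V : Type*} {G : SimpleGraph V}

/-- A diamond is `K₄` minus an edge: two triangles `abc`, `abd` sharing the edge `ab`. -/
def DiamondFree (G : SimpleGraph V) : Prop :=
  ∀ ⦃a b c d⦄, G.Adj a b → G.Adj a c → G.Adj b c → G.Adj a d → G.Adj b d → c = d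

theorem DiamondFree.card_le_three_of_isClique [DecidableEq V] (hG : G.DiamondFree)
    {s : Finset V} (hs : G.IsClique (s : Set V)) : #s ≤ 3 := by
  by_contra! hlt
  obtain ⟨a, ha⟩ : s.Nonempty := card_pos.mp (by omega)
  obtain ⟨b, hb, c, hc, d, hd, hbc, hbd, hcd⟩ :=
    two_lt_card.mp (show 2 < #(s.erase a) by rw [card_erase_of_mem ha]; omega)
  rw [mem_erase] at hb hc hd
  exact hcd (hG (hs ha hb.2 hb.1.symm) (hs ha hc.2 hc.1.symm) (hs hb.2 hc.2 hbc)
    (hs ha hd.2 hd.1.symm) (hs hb.2 hd.2 hbd))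

theorem adj_or_adj_or_adj_of_indepSetFree_three (hG : G.IndepSetFree 3) {x y z : V}
    (hxy : x ≠ y) (hxz : x ≠ z) (hyz : y ≠ z) : G.Adj x y ∨ G.Adj x z ∨ G.Adj y z := by
  classical
  by_contra! hnadj
  refine hG {x, y, z} ?_
  rw [← isNClique_compl, is3Clique_triple_iff]
  simp [compl_adj, *]

theorem exists_triangle_of_indepSetFree_three [Fintype V] (hV : 6 ≤ Fintype.card V)
    (hG : G.IndepSetFree 3) : ∃ a b c, G.Adj a b ∧ G.Adj a c ∧ G.Adj b c := by
  classical
  obtain ⟨v⟩ : Nonempty V := Fintype.card_pos_iff.mp (by omega)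
  have hcard : #{w ∈ univ.erase v | G.Adj v w} + #{w ∈ univ.erase v | ¬ G.Adj v w} =
      Fintype.card V - 1 := by
    rw [card_filter_add_card_filter_not, card_erase_of_mem (mem_univ v), card_univ]
  rcases le_or_gt 3 #{w ∈ univ.erase v | G.Adj v w} with hnbrs | hfew
  · obtain ⟨x, hx, y, hy, z, hz, hxy, hxz, hyz⟩ := two_lt_card.mp hnbrs
    simp only [mem_filter] at hx hy hz
    rcases adj_or_adj_or_adj_of_indepSetFree_three hG hxy hxz hyz with h | h | h
    · exact ⟨v, x, y, hx.2, hy.2, h⟩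
    · exact ⟨v, x, z, hx.2, hz.2, h⟩
    · exact ⟨v, y, z, hy.2, hz.2, h⟩
  · obtain ⟨x, hx, y, hy, z, hz, hxy, hxz, hyz⟩ := two_lt_card.mp
      (show 2 < #{w ∈ univ.erase v | ¬ G.Adj v w} by omega)
    simp only [mem_filter, mem_erase, mem_univ, and_true] at hx hy hz
    have hadj {p q : V} (hp : p ≠ v ∧ ¬ G.Adj v p) (hq : q ≠ v ∧ ¬ G.Adj v q) (hpq : p ≠ q) :
        G.Adj p q :=
      ((adj_or_adj_or_adj_of_indepSetFree_three hG hp.1.symm hq.1.symm hpq).resolve_left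
        hp.2).resolve_left hq.2
    exact ⟨x, y, z, hadj hx hy hxy, hadj hx hz hxz, hadj hy hz hyz⟩

theorem isClique_compl_of_triangle (hα : G.IndepSetFree 3) (hD : G.DiamondFree) {a b c : V}
    (hab : G.Adj a b) (hac : G.Adj a c) (hbc : G.Adj b c) :
    G.IsClique ({a, b, c} : Set V)ᶜ := by
  intro u hu w hw huw
  simp only [Set.mem_compl_iff, Set.mem_insert_iff, Set.mem_singleton_iff, not_or] at hu hw
  by_contra hn
  have hcover {p : V} (hpu : p ≠ u) (hpw : p ≠ w) : G.Adj p u ∨ G.Adj p w := by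
    by_contra! hp
    exact hn (((adj_or_adj_or_adj_of_indepSetFree_three hα hpu hpw huw).resolve_left
      hp.1).resolve_left hp.2)
  -- one of `u`, `w` sees two corners, so `hD` makes it the third corner
  rcases hcover (Ne.symm hu.1) (Ne.symm hw.1) with hau | haw <;>
    rcases hcover (Ne.symm hu.2.1) (Ne.symm hw.2.1) with hbu | hbw
  · exact hu.2.2 (hD hab hac hbc hau hbu).symm
  · rcases hcover (Ne.symm hu.2.2) (Ne.symm hw.2.2) with hcu | hcw
    · exact hu.2.1 (hD hac hab hbc.symm hau hcu).symm
    · exact hw.1 (hD hbc hab.symm hac.symm hbw hcw).symm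
  · rcases hcover (Ne.symm hu.2.2) (Ne.symm hw.2.2) with hcu | hcw
    · exact hu.1 (hD hbc hab.symm hac.symm hbu hcu).symm
    · exact hw.2.1 (hD hac hab hbc.symm haw hcw).symm
  · exact hw.2.2 (hD hab hac hbc haw hbw).symm

end SimpleGraph

/-- A simple graph on at least seven vertices with no two distinct triangles
sharing an edge has an independent set of size 3. -/
theorem independent_triple_of_no_shared_triangles {V : Type*} [Fintype V]
    (G : SimpleGraph V) (hcard : 7 ≤ Fintype.card V)
    (h : ¬ ∃ a b c d : V, c ≠ d ∧ G.Adj a b ∧ G.Adj a c ∧ G.Adj b c ∧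
      G.Adj a d ∧ G.Adj b d) :
    ∃ v₁ v₂ v₃ : V, v₁ ≠ v₂ ∧ v₁ ≠ v₃ ∧ v₂ ≠ v₃ ∧
      ¬ G.Adj v₁ v₂ ∧ ¬ G.Adj v₁ v₃ ∧ ¬ G.Adj v₂ v₃ := by
  classical
  by_contra! hI
  have hα : G.IndepSetFree 3 := by
    intro s hs
    rw [← isNClique_compl, is3Clique_iff] at hs
    obtain ⟨x, y, z, hxy, hxz, hyz, -⟩ := hs
    rw [compl_adj] at hxy hxz hyz
    exact hyz.2 (hI x y z hxy.1 hxz.1 hyz.1 hxy.2 hxz.2)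
  have hD : G.DiamondFree := fun a b c d hab hac hbc had hbd ↦
    by_contra fun hcd ↦ h ⟨a, b, c, d, hcd, hab, hac, hbc, had, hbd⟩
  obtain ⟨a, b, c, hab, hac, hbc⟩ := exists_triangle_of_indepSetFree_three (by omega) hα
  have hout := hD.card_le_three_of_isClique (s := {a, b, c}ᶜ)
    (by
      rw [coe_compl, coe_insert, coe_insert, coe_singleton]
      exact isClique_compl_of_triangle hα hD hab hac hbc)
  have hcorners : #({a, b, c} : Finset V) ≤ 3 := card_le_three
  rw [card_compl] at hout
  omega
end

section
/- Let f be a homogeneous cubic over C vanishing on E1 = V(x0,x1), E2 = V(x2,x3), E3 = V(x0-x2,x1-x3), and let g(t) be the associated cubic g(t) = alpha_{2,0,1,0} t^3 + (alpha_{2,0,0,1} + alpha_{1,1,1,0}) t^2 + (alpha_{0,2,1,0} + alpha_{1,1,0,1}) t + alpha_{0,2,0,1}. Then for t in C, the line V(x0 - t*x1, x2 - t*x3) is contained in V(f) if and only if g(t) = 0. -/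
/-!
Restricted to the line `x₀ = t·x₁, x₂ = t·x₃`, parametrised by `(u, v) ↦ (tu, u, tv, v)`, the
cubic `f` becomes a binary cubic `φ(u, v)` whose coefficient of `u²v` is `g(t)`. Its values
`φ(1, 0)`, `φ(0, 1)` and `φ(1, 1)` are values of `f` on `E₂`, `E₁` and `E₃`, so they vanish;
this kills the `u³` and `v³` coefficients and forces the `uv²` coefficient to be `-g(t)`.
Hence `φ(u, v) = g(t) · uv(u - v)`, which vanishes identically exactly when `g(t) = 0`.
-/

/-- The general homogeneous cubic form in four variables, with coefficient
`aIJKL` of the monomial `x0^I * x1^J * x2^K * x3^L`. -/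
def cubicForm (a3000 a0300 a0030 a0003 a2100 a2010 a2001 a1200 a0210 a0201
    a1020 a0120 a0021 a1002 a0102 a0012 a1110 a1101 a1011 a0111 : ℂ)
    (x0 x1 x2 x3 : ℂ) : ℂ :=
  a3000 * x0 ^ 3 + a0300 * x1 ^ 3 + a0030 * x2 ^ 3 + a0003 * x3 ^ 3
    + a2100 * x0 ^ 2 * x1 + a2010 * x0 ^ 2 * x2 + a2001 * x0 ^ 2 * x3
    + a1200 * x0 * x1 ^ 2 + a0210 * x1 ^ 2 * x2 + a0201 * x1 ^ 2 * x3
    + a1020 * x0 * x2 ^ 2 + a0120 * x1 * x2 ^ 2 + a0021 * x2 ^ 2 * x3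
    + a1002 * x0 * x3 ^ 2 + a0102 * x1 * x3 ^ 2 + a0012 * x2 * x3 ^ 2
    + a1110 * x0 * x1 * x2 + a1101 * x0 * x1 * x3 + a1011 * x0 * x2 * x3
    + a0111 * x1 * x2 * x3

theorem cubicForm_eval_line (a3000 a0300 a0030 a0003 a2100 a2010 a2001 a1200 a0210
    a0201 a1020 a0120 a0021 a1002 a0102 a0012 a1110 a1101 a1011 a0111 t u v : ℂ) :
    let F := cubicForm a3000 a0300 a0030 a0003 a2100 a2010 a2001 a1200 a0210 a0201 a1020
      a0120 a0021 a1002 a0102 a0012 a1110 a1101 a1011 a0111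
    F (t * u) u (t * v) v =
      u ^ 3 * F t 1 0 0 + v ^ 3 * F 0 0 t 1 + u * v ^ 2 * (F t 1 t 1 - F t 1 0 0 - F 0 0 t 1)
        + (a2010 * t ^ 3 + (a2001 + a1110) * t ^ 2 + (a0210 + a1101) * t + a0201)
          * (u ^ 2 * v - u * v ^ 2) := by
  simp only [cubicForm]
  ring

theorem forall_mul_sq_mul_sub_mul_sq_eq_zero_iff {K : Type*} [Field K] [NeZero (2 : K)] (c : K) :
    (∀ u v : K, c * (u ^ 2 * v - u * v ^ 2) = 0) ↔ c = 0 := by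
  refine ⟨fun h => ?_, fun hc u v => by rw [hc, zero_mul]⟩
  have h21 : c * 2 = 0 := by linear_combination h 2 1
  exact (mul_eq_zero.mp h21).resolve_right two_ne_zero

/-- If a homogeneous cubic f vanishes on E₁, E₂, E₃, then the line
V(x₀ - t·x₁, x₂ - t·x₃) is contained in V(f) iff g(t) = 0, where g is the
associated cubic. -/
theorem line_in_cubic_iff_root (a3000 a0300 a0030 a0003 a2100 a2010 a2001 a1200 a0210 a0201 a1020 a0120 a0021 a1002 a0102 a0012 a1110 a1101 a1011 a0111 : ℂ)
    (F : ℂ → ℂ → ℂ → ℂ → ℂ)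
    (hF : F = cubicForm a3000 a0300 a0030 a0003 a2100 a2010 a2001 a1200 a0210 a0201 a1020 a0120 a0021 a1002 a0102 a0012 a1110 a1101 a1011 a0111)
    (hE1 : ∀ a b : ℂ, F 0 0 a b = 0)
    (hE2 : ∀ a b : ℂ, F a b 0 0 = 0)
    (hE3 : ∀ a b : ℂ, F a b a b = 0) :
    ∀ t : ℂ, (∀ u v : ℂ, F (t * u) u (t * v) v = 0) ↔
      a2010 * t ^ 3 + (a2001 + a1110) * t ^ 2 +
        (a0210 + a1101) * t + a0201 = 0 := by
  subst hF
  intro t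
  simp only [cubicForm_eval_line, hE1 t 1, hE2 t 1, hE3 t 1, sub_zero, mul_zero,
    zero_add]
  exact forall_mul_sq_mul_sub_mul_sq_eq_zero_iff _
end

section
/- Let f be a homogeneous cubic over C vanishing on E1 = V(x0,x1), E2 = V(x2,x3), E3 = V(x0-x2,x1-x3), and let t_i be a root of the associated cubic g. Then f(t_i*x1, x1, x2, x3) factors as x1 * (x2 - t_i*x3) * l, where l = (t_i^2 alpha_{2,0,1,0} + t_i alpha_{1,1,1,0} + alpha_{0,2,1,0}) x1 + (t_i alpha_{1,0,2,0} + alpha_{0,1,2,0}) x2 + (t_i^2 alpha_{1,0,2,0} + t_i(alpha_{0,1,2,0} + alpha_{1,0,1,1}) + alpha_{0,1,1,1}) x3. -/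
theorem cubicForm_on_x0_eq_t_mul_x1 (a3000 a0300 a0030 a0003 a2100 a2010 a2001 a1200 a0210 a0201
    a1020 a0120 a0021 a1002 a0102 a0012 a1110 a1101 a1011 a0111 : ℂ)
    (h1 : a3000 = 0) (h2 : a0300 = 0) (h3 : a0030 = 0) (h4 : a0003 = 0)
    (h5 : a2100 = 0) (h6 : a1200 = 0) (h7 : a0021 = 0) (h8 : a0012 = 0)
    (h9 : a0201 + a0102 = 0) (h10 : a2010 + a1020 = 0)
    (h11 : a0210 + a1002 + a1101 + a0111 = 0)
    (h12 : a0120 + a2001 + a1011 + a1110 = 0) (t x1 x2 x3 : ℂ) :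
    cubicForm a3000 a0300 a0030 a0003 a2100 a2010 a2001 a1200 a0210 a0201 a1020 a0120 a0021
        a1002 a0102 a0012 a1110 a1101 a1011 a0111 (t * x1) x1 x2 x3 =
      x1 * (x2 - t * x3) *
          ((t ^ 2 * a2010 + t * a1110 + a0210) * x1 +
            (t * a1020 + a0120) * x2 +
            (t ^ 2 * a1020 + t * (a0120 + a1011) + a0111) * x3) +
        x1 * x3 * (x1 - x3) *
          (a2010 * t ^ 3 + (a2001 + a1110) * t ^ 2 + (a0210 + a1101) * t + a0201) := by
  unfold cubicForm
  linear_combination (t ^ 3 * x1 ^ 3) * h1 + x1 ^ 3 * h2 + x2 ^ 3 * h3 + x3 ^ 3 * h4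
    + (t ^ 2 * x1 ^ 3) * h5 + (t * x1 ^ 3) * h6 + (x2 ^ 2 * x3) * h7 + (x2 * x3 ^ 2) * h8
    + (x1 * x3 ^ 2) * h9 + (t ^ 3 * x1 * x3 ^ 2) * h10 + (t * x1 * x3 ^ 2) * h11
    + (t ^ 2 * x1 * x3 ^ 2) * h12

/-- Factorization of f(tᵢ·x₁, x₁, x₂, x₃) as x₁·(x₂ - tᵢ·x₃)·ℓ, where tᵢ is a
root of the associated cubic g and the coefficients satisfy equation (1). -/
theorem factorization_H1 (a3000 a0300 a0030 a0003 a2100 a2010 a2001 a1200 a0210 a0201 a1020 a0120 a0021 a1002 a0102 a0012 a1110 a1101 a1011 a0111 : ℂ)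
    (h1 : a3000 = 0) (h2 : a0300 = 0) (h3 : a0030 = 0) (h4 : a0003 = 0)
    (h5 : a2100 = 0) (h6 : a1200 = 0) (h7 : a0021 = 0) (h8 : a0012 = 0)
    (h9 : a0201 + a0102 = 0) (h10 : a2010 + a1020 = 0)
    (h11 : a0210 + a1002 + a1101 + a0111 = 0)
    (h12 : a0120 + a2001 + a1011 + a1110 = 0)
    (t : ℂ)
    (hroot : a2010 * t ^ 3 + (a2001 + a1110) * t ^ 2 +
      (a0210 + a1101) * t + a0201 = 0) :
    ∀ x1 x2 x3 : ℂ,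
      cubicForm a3000 a0300 a0030 a0003 a2100 a2010 a2001 a1200 a0210 a0201 a1020 a0120 a0021 a1002 a0102 a0012 a1110 a1101 a1011 a0111 (t * x1) x1 x2 x3 =
        x1 * (x2 - t * x3) *
          ((t ^ 2 * a2010 + t * a1110 + a0210) * x1 +
            (t * a1020 + a0120) * x2 +
            (t ^ 2 * a1020 + t * (a0120 + a1011) + a0111) * x3) := by
  intro x1 x2 x3
  rw [cubicForm_on_x0_eq_t_mul_x1 _ _ _ _ _ _ _ _ _ _ _ _ _ _ _ _ _ _ _ _
    h1 h2 h3 h4 h5 h6 h7 h8 h9 h10 h11 h12 t x1 x2 x3, hroot, mul_zero, add_zero]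
end

section
/- Let f be a homogeneous cubic over C vanishing on E1, E2, E3 as above, and let t_i be a root of the associated cubic g. Then f(x0, x1, t_i*x3, x3) factors as x3 * (x0 - t_i*x1) * l, where l = (t_i alpha_{2,0,1,0} + alpha_{2,0,0,1}) x0 + (t_i^2 alpha_{2,0,1,0} + t_i(alpha_{2,0,0,1} + alpha_{1,1,1,0}) + alpha_{1,1,0,1}) x1 + (t_i^2 alpha_{1,0,2,0} + t_i alpha_{1,0,1,1} + alpha_{1,0,0,2}) x3. -/
/-- Factorization of f(x₀, x₁, tᵢ·x₃, x₃) as x₃·(x₀ - tᵢ·x₁)·ℓ, where tᵢ is a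
root of the associated cubic g and the coefficients satisfy equation (1). -/
theorem factorization_H2 (a3000 a0300 a0030 a0003 a2100 a2010 a2001 a1200 a0210 a0201 a1020 a0120 a0021 a1002 a0102 a0012 a1110 a1101 a1011 a0111 : ℂ)
    (h1 : a3000 = 0) (h2 : a0300 = 0) (h3 : a0030 = 0) (h4 : a0003 = 0)
    (h5 : a2100 = 0) (h6 : a1200 = 0) (h7 : a0021 = 0) (h8 : a0012 = 0)
    (h9 : a0201 + a0102 = 0) (h10 : a2010 + a1020 = 0)
    (h11 : a0210 + a1002 + a1101 + a0111 = 0)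
    (h12 : a0120 + a2001 + a1011 + a1110 = 0)
    (t : ℂ)
    (hroot : a2010 * t ^ 3 + (a2001 + a1110) * t ^ 2 +
      (a0210 + a1101) * t + a0201 = 0) :
    ∀ x0 x1 x3 : ℂ,
      cubicForm a3000 a0300 a0030 a0003 a2100 a2010 a2001 a1200 a0210 a0201 a1020 a0120 a0021 a1002 a0102 a0012 a1110 a1101 a1011 a0111 x0 x1 (t * x3) x3 =
        x3 * (x0 - t * x1) *
          ((t * a2010 + a2001) * x0 +
            (t ^ 2 * a2010 + t * (a2001 + a1110) + a1101) * x1 +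
            (t ^ 2 * a1020 + t * a1011 + a1002) * x3) := by
  intro x0 x1 x3
  subst h1 h2 h3 h4 h5 h6 h7 h8
  unfold cubicForm
  -- Modulo the four linear relations, the difference of the two sides is x1 x3 (x1 - x3) g(t).
  linear_combination (x1 ^ 2 * x3 - x1 * x3 ^ 2) * hroot +
    x1 * x3 ^ 2 * (t ^ 3 * h10 + t ^ 2 * h12 + t * h11 + h9)
end

section
/- Let f be a homogeneous cubic over C vanishing on E1, E2, E3 as above, and let t_i be a root of the associated cubic g. Then f(x2 + t_i*(x1 - x3), x1, x2, x3) factors as (x1 - x3) * (x2 - t_i*x3) * l, where l = (t_i^2 alpha_{2,0,1,0} + t_i alpha_{1,1,1,0} + alpha_{0,2,1,0}) x1 + (t_i alpha_{2,0,1,0} + alpha_{0,1,2,0} + alpha_{1,1,1,0}) x2 + (t_i alpha_{2,0,0,1} - alpha_{1,0,0,2}) x3. -/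
/-- Factorization of f(x₂ + tᵢ·(x₁ - x₃), x₁, x₂, x₃) as
(x₁ - x₃)·(x₂ - tᵢ·x₃)·ℓ, where tᵢ is a root of the associated cubic g and the
coefficients satisfy equation (1). -/
theorem factorization_H3 (a3000 a0300 a0030 a0003 a2100 a2010 a2001 a1200 a0210 a0201 a1020 a0120 a0021 a1002 a0102 a0012 a1110 a1101 a1011 a0111 : ℂ)
    (h1 : a3000 = 0) (h2 : a0300 = 0) (h3 : a0030 = 0) (h4 : a0003 = 0)
    (h5 : a2100 = 0) (h6 : a1200 = 0) (h7 : a0021 = 0) (h8 : a0012 = 0)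
    (h9 : a0201 + a0102 = 0) (h10 : a2010 + a1020 = 0)
    (h11 : a0210 + a1002 + a1101 + a0111 = 0)
    (h12 : a0120 + a2001 + a1011 + a1110 = 0)
    (t : ℂ)
    (hroot : a2010 * t ^ 3 + (a2001 + a1110) * t ^ 2 +
      (a0210 + a1101) * t + a0201 = 0) :
    ∀ x1 x2 x3 : ℂ,
      cubicForm a3000 a0300 a0030 a0003 a2100 a2010 a2001 a1200 a0210 a0201 a1020 a0120 a0021 a1002 a0102 a0012 a1110 a1101 a1011 a0111 (x2 + t * (x1 - x3)) x1 x2 x3 =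
        (x1 - x3) * (x2 - t * x3) *
          ((t ^ 2 * a2010 + t * a1110 + a0210) * x1 +
            (t * a2010 + a0120 + a1110) * x2 +
            (t * a2001 - a1002) * x3) := by
  intro x1 x2 x3
  subst h1 h2 h3 h4 h5 h6 h7 h8
  unfold cubicForm
  linear_combination (x1 ^ 2 * x3 - x1 * x3 ^ 2) * hroot + x1 * x3 ^ 2 * h9 +
    (x2 ^ 3 - t * x2 ^ 2 * x3 + t * x1 * x2 ^ 2) * h10 + x1 * x2 * x3 * h11 +
    (x2 ^ 2 * x3 - t * x2 * x3 ^ 2 + t * x1 * x2 * x3) * h12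
end
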